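/- arXiv:2103.06741 — 2 statements merged into one kernel-verified Lean document; each statement's English description precedes it below -/
import Mathlib

section
/- In the flat-order complete lattice monoid on ℕ ∪ {⊥,⊤} (addition extended by a+⊥=⊥, a+⊤=⊤ for a ∈ ℕ∪{⊤}, ⊤+⊥=⊥), the set of cancellative elements is exactly ℕ, and it is not closed under binary least upper bounds. -/
/-- Elements of the flat-order CLM on `ℕ ∪ {⊥, ⊤}`. -/
inductive Flat where
  | bot : Flat
  | nat : ℕ → Flat
  | top : Flat
  deriving DecidableEq

namespace Flat

/-- Addition: natural addition on `ℕ`, extended by `a + ⊥ = ⊥` (for any `a`,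
including `⊤`) and `a + ⊤ = ⊤` for `a ∈ ℕ ∪ {⊤}`. -/
def add : Flat → Flat → Flat
  | bot, _ => bot
  | _, bot => bot
  | top, _ => top
  | _, top => top
  | nat m, nat n => nat (m + n)

/-- The flat order: `⊥ ≤ a ≤ ⊤` for all `a`, distinct naturals incomparable. -/
instance : PartialOrder Flat where
  le a b := a = b ∨ a = bot ∨ b = top
  le_refl a := Or.inl rfl
  le_trans a b c hab hbc := by
    rcases hab with h | h | h <;> rcases hbc with h' | h' | h' <;> simp_all
  le_antisymm a b hab hba := by
    rcases hab with h | h | h <;> rcases hba with h' | h' | h' <;> simp_all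

end Flat

/-- In the flat-order complete lattice monoid on `ℕ ∪ {⊥, ⊤}`, the cancellative
elements are exactly the naturals, and they are not closed under binary LUBs. -/
theorem flat_cancellative_eq_nat_not_sup_closed :
    ({c : Flat | ∀ a b : Flat, Flat.add a c = Flat.add b c → a = b} =
      Set.range Flat.nat) ∧
    (∃ a b s : Flat, (∃ m, a = Flat.nat m) ∧ (∃ n, b = Flat.nat n) ∧
      IsLUB {a, b} s ∧ ¬ ∃ n, s = Flat.nat n) := by
  constructor
  · ext c
    constructor
    · intro h
      cases c with
      | bot => exact absurd (h (Flat.nat 0) (Flat.nat 1) rfl) (by simp)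
      | nat n => exact ⟨n, rfl⟩
      | top => exact absurd (h (Flat.nat 0) (Flat.nat 1) rfl) (by simp)
    · rintro ⟨n, rfl⟩ a b hab
      cases a <;> cases b <;> simp_all [Flat.add]
  · refine ⟨Flat.nat 0, Flat.nat 1, Flat.top, ⟨0, rfl⟩, ⟨1, rfl⟩, ⟨?_, ?_⟩, by simp⟩
    · intro x hx
      rcases hx with rfl | rfl <;> exact Or.inr (Or.inr rfl)
    · intro x hx
      have h0 := hx (Set.mem_insert _ _)
      have h1 := hx (by simp : Flat.nat 1 ∈ ({Flat.nat 0, Flat.nat 1} : Set Flat))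
      rcases h0 with h | h | h <;> rcases h1 with h' | h' | h' <;> first | (subst h; simp_all) | simp_all
end

section
/- Let A be a residuated POM with bottom, and a, b ∈ Lex_k(A). Define γ(a,b) = min{i : a_i ⊖ b_i ∈ C(A)} and δ(a,b) = min{i : (a_i ⊖ b_i) ⊗ b_i < a_i} (each taken to be k+1 if the corresponding set is empty). Then either δ(a,b) = k+1 or δ(a,b) ≤ γ(a,b). -/
/-- `c` is cancellative: `x * c = y * c` implies `x = y`; `C(A)` is the set of
non-cancellative elements. -/
def IsCancellative {A : Type*} [CommMonoid A] (c : A) : Prop :=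
  ∀ x y : A, x * c = y * c → x = y

/-- Membership in `Lex_k(A)` (0-based indexing): any non-cancellative component
is followed only by `⊥`'s. -/
def MemLex {A : Type*} [CommMonoid A] [PartialOrder A] [OrderBot A] {k : ℕ} (a : Fin k → A) : Prop :=
  ∀ i j : Fin k, i < j → ¬ IsCancellative (a i) → a j = ⊥

/-- Let `A` be a residuated POM with bottom and `a, b ∈ Lex_k(A)` (indexed
`0, …, k-1`). Let `γ` be the least index `i` with `a_i ⊖ b_i ∈ C(A)` and `δ` the
least index `i` with `(a_i ⊖ b_i) ⊗ b_i < a_i`, each taken to be `k` if no such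
index exists. Then either `δ = k` or `δ ≤ γ`. -/
theorem delta_le_gamma {A : Type*} [CommMonoid A] [PartialOrder A] [OrderBot A]
    (sub : A → A → A) (hres : ∀ a b c : A, b * c ≤ a ↔ c ≤ sub a b)
    {k : ℕ} (a b : Fin k → A) (ha : MemLex a) (hb : MemLex b)
    (γ δ : ℕ)
    (hγ : IsLeast {i : ℕ | ∃ h : i < k, ¬ IsCancellative (sub (a ⟨i, h⟩) (b ⟨i, h⟩))} γ ∨
      ({i : ℕ | ∃ h : i < k, ¬ IsCancellative (sub (a ⟨i, h⟩) (b ⟨i, h⟩))} = ∅ ∧ γ = k))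
    (hδ : IsLeast {i : ℕ | ∃ h : i < k, sub (a ⟨i, h⟩) (b ⟨i, h⟩) * b ⟨i, h⟩ < a ⟨i, h⟩} δ ∨
      ({i : ℕ | ∃ h : i < k, sub (a ⟨i, h⟩) (b ⟨i, h⟩) * b ⟨i, h⟩ < a ⟨i, h⟩} = ∅ ∧ δ = k)) :
    δ = k ∨ δ ≤ γ := by
  rcases hδ with hδ | ⟨_, hδ⟩
  · rcases hγ with hγ | ⟨hγe, hγ⟩
    · -- both least; show δ ≤ γ
      right
      by_contra hlt
      push_neg at hlt
      obtain ⟨hγk, hγnc⟩ := hγ.1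
      obtain ⟨hδk, hδlt⟩ := hδ.1
      -- sub a_γ b_γ * b_γ ≤ a_γ always
      have hle : ∀ x y : A, sub x y * y ≤ x := fun x y => by
        rw [mul_comm]; exact (hres x y (sub x y)).mpr le_rfl
      -- since γ ∉ S_δ (γ < δ and δ least), equality holds
      have hγnδ : γ ∉ {i : ℕ | ∃ h : i < k, sub (a ⟨i, h⟩) (b ⟨i, h⟩) * b ⟨i, h⟩ < a ⟨i, h⟩} := by
        intro hmem
        exact absurd (hδ.2 hmem) (not_le.mpr hlt)
      have heq : sub (a ⟨γ, hγk⟩) (b ⟨γ, hγk⟩) * b ⟨γ, hγk⟩ = a ⟨γ, hγk⟩ := by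
        rcases lt_or_eq_of_le (hle (a ⟨γ, hγk⟩) (b ⟨γ, hγk⟩)) with h | h
        · exact absurd ⟨hγk, h⟩ hγnδ
        · exact h
      -- a_γ is non-cancellative
      have hanc : ¬ IsCancellative (a ⟨γ, hγk⟩) := by
        intro hc
        apply hγnc
        intro x y hxy
        apply hc
        calc x * a ⟨γ, hγk⟩ = x * (sub (a ⟨γ, hγk⟩) (b ⟨γ, hγk⟩) * b ⟨γ, hγk⟩) := by rw [heq]
          _ = x * sub (a ⟨γ, hγk⟩) (b ⟨γ, hγk⟩) * b ⟨γ, hγk⟩ := by rw [mul_assoc]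
          _ = y * sub (a ⟨γ, hγk⟩) (b ⟨γ, hγk⟩) * b ⟨γ, hγk⟩ := by rw [hxy]
          _ = y * (sub (a ⟨γ, hγk⟩) (b ⟨γ, hγk⟩) * b ⟨γ, hγk⟩) := by rw [mul_assoc]
          _ = y * a ⟨γ, hγk⟩ := by rw [heq]
      -- so a_δ = ⊥
      have habot : a ⟨δ, hδk⟩ = ⊥ := ha ⟨γ, hγk⟩ ⟨δ, hδk⟩ hlt hanc
      rw [habot] at hδlt
      exact (not_lt_bot (lt_of_le_of_lt (le_trans (hle ⊥ (b ⟨δ, hδk⟩)) bot_le) hδlt))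
    · -- γ = k; δ < k since δ ∈ S_δ
      right
      obtain ⟨hδk, _⟩ := hδ.1
      omega
  · exact Or.inl hδ
end
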